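/- arXiv:2009.09723 — 4 statements merged into one kernel-verified Lean document; each statement's English description precedes it below -/
import Mathlib

section
/- Let X be a finite nonempty set with n = |X|, and let Δ_1, …, Δ_N be subsets of X. For each x ∈ X and t ∈ {0, 1, …, N}, define the count c_t(x) = #{s : 1 ≤ s ≤ t and x ∈ Δ_s} and the weight w_t(x) = (1/n)·2^{c_t(x)} (so w_0(x) = 1/n and each step t doubles the weights of exactly the elements of Δ_t). Assume that for every t ∈ {1, …, N}, Σ_{x ∈ Δ_t} w_{t−1}(x) < 1. Then for every x ∈ X, the final count satisfies c_N(x) < log₂(2n), i.e., the weight of any element of X is doubled at most lg(2|X|) times. -/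
/-! Induction on the step: `x` can only be doubled at a step where its weight `2 ^ c / n`
is below `1`, so right after any doubling `2 ^ c < 2n`, and steps that skip `x` keep `c`. -/

open Finset

section DoublingCount

variable {X : Type*} [DecidableEq X] (Δ : ℕ → Finset X)

def doublingCount (t : ℕ) (x : X) : ℕ := #{s ∈ Icc 1 t | x ∈ Δ s}

@[simp]
lemma doublingCount_zero (x : X) : doublingCount Δ 0 x = 0 := by
  simp [doublingCount]

lemma doublingCount_succ (t : ℕ) (x : X) :
    doublingCount Δ (t + 1) x = doublingCount Δ t x + if x ∈ Δ (t + 1) then 1 else 0 := by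
  rw [doublingCount, ← insert_Icc_right_eq_Icc_add_one (by omega), filter_insert]
  split_ifs
  · exact card_insert_of_notMem (by simp)
  · rfl

lemma two_pow_doublingCount_lt {n N : ℕ} (hn : 0 < n) (x : X)
    (hlight : ∀ t < N, x ∈ Δ (t + 1) → 2 ^ doublingCount Δ t x < n) :
    2 ^ doublingCount Δ N x < 2 * n := by
  induction N with
  | zero => simp only [doublingCount_zero, pow_zero]; omega
  | succ N ih =>
    have ih := ih fun t ht => hlight t (by omega)
    rw [doublingCount_succ]
    split_ifs with hx
    · rw [pow_succ, mul_comm]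
      exact Nat.mul_lt_mul_of_pos_left (hlight N (by omega) hx) two_pos
    · simpa using ih

end DoublingCount

theorem weight_doubled_at_most_lg_card_general
    {X : Type*} [Fintype X] [DecidableEq X]
    (N : ℕ) (Δ : ℕ → Finset X)
    (c : ℕ → X → ℕ)
    (hc : ∀ t x, c t x = ((Finset.Icc 1 t).filter (fun s => x ∈ Δ s)).card)
    (w : ℕ → X → ℝ)
    (hw : ∀ t x, w t x = (1 / (Fintype.card X : ℝ)) * 2 ^ (c t x))
    (hstep : ∀ t, 1 ≤ t → t ≤ N → ∑ x ∈ Δ t, w (t - 1) x < 1) :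
    ∀ x : X, (c N x : ℝ) < Real.logb 2 (2 * Fintype.card X) := by
  intro x
  have hn : 0 < Fintype.card X := Fintype.card_pos_iff.2 ⟨x⟩
  obtain rfl : c = doublingCount Δ := funext₂ hc
  have hpow : 2 ^ doublingCount Δ N x < 2 * Fintype.card X := by
    refine two_pow_doublingCount_lt Δ hn x fun t ht hx => ?_
    have hw_nonneg : ∀ y, 0 ≤ w t y := fun y => by rw [hw]; positivity
    have hwx : w t x < 1 :=
      (single_le_sum (fun y _ => hw_nonneg y) hx).trans_lt (hstep (t + 1) (by omega) ht)
    rw [hw, one_div, inv_mul_lt_one₀ (by exact_mod_cast hn)] at hwx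
    exact_mod_cast hwx
  rw [Real.lt_logb_iff_rpow_lt one_lt_two (by positivity), Real.rpow_natCast]
  exact_mod_cast hpow

/-- Lemma 1 of the paper. In the teaching oracle's weight dynamics
over a finite nonempty instance space `X` with `n = |X|`, where each step
`t ∈ {1, …, N}` doubles the weights of exactly the elements of `Δ t`
(so `w t x = (1/n) * 2 ^ (c t x)` with `c t x = #{s : 1 ≤ s ≤ t, x ∈ Δ s}`),
and every doubling step `t` satisfies `∑ x ∈ Δ t, w (t-1) x < 1`,
the final count of any `x ∈ X` satisfies `c N x < log₂ (2n)`. -/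
theorem weight_doubled_at_most_lg_card
    {X : Type*} [Fintype X] [Nonempty X] [DecidableEq X]
    (N : ℕ) (Δ : ℕ → Finset X)
    (c : ℕ → X → ℕ)
    (hc : ∀ t x, c t x = ((Finset.Icc 1 t).filter (fun s => x ∈ Δ s)).card)
    (w : ℕ → X → ℝ)
    (hw : ∀ t x, w t x = (1 / (Fintype.card X : ℝ)) * 2 ^ (c t x))
    (hstep : ∀ t, 1 ≤ t → t ≤ N → ∑ x ∈ Δ t, w (t - 1) x < 1) :
    ∀ x : X, (c N x : ℝ) < Real.logb 2 (2 * Fintype.card X) :=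
  weight_doubled_at_most_lg_card_general N Δ c hc w hw hstep
end

section
/- Let X be a finite nonempty set with n = |X|, and let Δ_1, …, Δ_N be subsets of X with weights defined as w_t(x) = (1/n)·2^{c_t(x)}, where c_t(x) = #{s : 1 ≤ s ≤ t and x ∈ Δ_s}. Assume that for every t ∈ {1, …, N}, Σ_{x ∈ Δ_t} w_{t−1}(x) < 1. Then the final total weight satisfies Σ_{x ∈ X} w_N(x) ≤ 1 + N. Moreover, if additionally there is a finite set T ⊆ X with Δ_t ∩ T ≠ ∅ for every t, then Σ_{x ∈ X} w_N(x) ≤ 1 + |T| · log₂(2n). -/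
open Finset

/-!
Each doubling step adds the weight of `Δ t`, which is less than `1`, so the total weight grows by
less than `1` per step. For the second bound, a weight is only doubled while it is below `1`, so
no weight ever exceeds `2`; hence no point is doubled more than `log₂ (2n)` times. Since every step
doubles some point of `T`, the number of steps is at most the total number of doublings of points
of `T`, that is at most `|T| log₂ (2n)`.
-/

section

variable {X : Type*} [DecidableEq X] (Δ : ℕ → Finset X)

lemma le_sum_doublingCount {N : ℕ} {T : Finset X}
    (hT : ∀ t, 1 ≤ t → t ≤ N → ∃ x ∈ Δ t, x ∈ T) : N ≤ ∑ x ∈ T, doublingCount Δ N x := by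
  have hhit (s : ℕ) (hs : s ∈ Icc 1 N) : 1 ≤ #{x ∈ T | x ∈ Δ s} := by
    obtain ⟨x, hxΔ, hxT⟩ := hT s (mem_Icc.1 hs).1 (mem_Icc.1 hs).2
    exact card_pos.2 ⟨x, mem_filter.2 ⟨hxT, hxΔ⟩⟩
  calc N = ∑ _s ∈ Icc 1 N, 1 := by simp
    _ ≤ ∑ s ∈ Icc 1 N, #{x ∈ T | x ∈ Δ s} := sum_le_sum hhit
    _ = ∑ x ∈ T, doublingCount Δ N x :=
      (sum_card_bipartiteAbove_eq_sum_card_bipartiteBelow (fun x s => x ∈ Δ s)).symm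

variable [Fintype X]

noncomputable def weight (t : ℕ) (x : X) : ℝ :=
  1 / (Fintype.card X : ℝ) * 2 ^ doublingCount Δ t x

lemma weight_nonneg (t : ℕ) (x : X) : 0 ≤ weight Δ t x := by
  unfold weight; positivity

lemma weight_succ (t : ℕ) (x : X) :
    weight Δ (t + 1) x = if x ∈ Δ (t + 1) then 2 * weight Δ t x else weight Δ t x := by
  simp only [weight, doublingCount_succ]
  split_ifs <;> ring

lemma sum_weight_zero [Nonempty X] : ∑ x, weight Δ 0 x = 1 := by
  simp [weight]

lemma sum_weight_succ (t : ℕ) :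
    ∑ x, weight Δ (t + 1) x = ∑ x, weight Δ t x + ∑ x ∈ Δ (t + 1), weight Δ t x := by
  have hsplit (x : X) :
      weight Δ (t + 1) x = weight Δ t x + if x ∈ Δ (t + 1) then weight Δ t x else 0 := by
    rw [weight_succ]; split_ifs <;> ring
  simp only [hsplit, sum_add_distrib, sum_ite_mem, univ_inter]

lemma doublingCount_le_logb {t : ℕ} {x : X} (hx : weight Δ t x ≤ 2) :
    (doublingCount Δ t x : ℝ) ≤ Real.logb 2 (2 * Fintype.card X) := by
  have hn : (0 : ℝ) < Fintype.card X := by exact_mod_cast Fintype.card_pos_iff.2 ⟨x⟩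
  rw [weight, one_div_mul_eq_div, div_le_iff₀ hn] at hx
  rw [Real.le_logb_iff_rpow_le one_lt_two (by positivity), Real.rpow_natCast]
  exact hx

variable {Δ} {N : ℕ} (hstep : ∀ t < N, ∑ x ∈ Δ (t + 1), weight Δ t x < 1)
include hstep

lemma sum_weight_le [Nonempty X] : ∑ x, weight Δ N x ≤ 1 + N := by
  have hgrowth : ∀ t ∈ range N, ∑ x, weight Δ (t + 1) x - ∑ x, weight Δ t x ≤ 1 := by
    intro t ht
    rw [sum_weight_succ]
    linarith [hstep t (mem_range.1 ht)]
  have htelescope := sum_le_card_nsmul _ _ _ hgrowth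
  rw [sum_range_sub (fun t => ∑ x, weight Δ t x), sum_weight_zero, card_range,
    nsmul_one] at htelescope
  linarith

lemma weight_le_two {t : ℕ} (ht : t ≤ N) (x : X) : weight Δ t x ≤ 2 := by
  induction t with
  | zero =>
    have hn : (1 : ℝ) ≤ Fintype.card X := by exact_mod_cast Fintype.card_pos_iff.2 ⟨x⟩
    simp only [weight, doublingCount_zero, pow_zero, mul_one]
    linarith [div_le_one_of_le₀ hn (by positivity)]
  | succ t ih =>
    rw [weight_succ]
    split_ifs with hx
    · have hle_sum : weight Δ t x ≤ ∑ y ∈ Δ (t + 1), weight Δ t y :=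
        single_le_sum (fun y _ => weight_nonneg Δ t y) hx
      linarith [hstep t ht]
    · exact ih (by omega)

end

/-- second part of Lemma 2 of the paper. With the teaching oracle's
weight dynamics (`w t x = (1/n) * 2 ^ (c t x)`, `c t x = #{s : 1 ≤ s ≤ t, x ∈ Δ s}`,
each doubling step `t` satisfying `∑ x ∈ Δ t, w (t-1) x < 1`), the final total weight
satisfies `∑ x, w N x ≤ 1 + N`; moreover, if every `Δ t` (for `1 ≤ t ≤ N`) intersects
a fixed finite set `T ⊆ X`, then `∑ x, w N x ≤ 1 + |T| * log₂ (2n)`. -/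
theorem total_weight_le
    {X : Type*} [Fintype X] [Nonempty X] [DecidableEq X]
    (N : ℕ) (Δ : ℕ → Finset X)
    (c : ℕ → X → ℕ)
    (hc : ∀ t x, c t x = ((Finset.Icc 1 t).filter (fun s => x ∈ Δ s)).card)
    (w : ℕ → X → ℝ)
    (hw : ∀ t x, w t x = (1 / (Fintype.card X : ℝ)) * 2 ^ (c t x))
    (hstep : ∀ t, 1 ≤ t → t ≤ N → ∑ x ∈ Δ t, w (t - 1) x < 1) :
    (∑ x : X, w N x ≤ 1 + N) ∧
      (∀ T : Finset X, (∀ t, 1 ≤ t → t ≤ N → ∃ x ∈ Δ t, x ∈ T) →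
        ∑ x : X, w N x ≤ 1 + T.card * Real.logb 2 (2 * Fintype.card X)) := by
  obtain rfl : c = doublingCount Δ := funext₂ hc
  obtain rfl : w = weight Δ := funext₂ hw
  have hstep' : ∀ t < N, ∑ x ∈ Δ (t + 1), weight Δ t x < 1 := fun t ht => by
    simpa using hstep (t + 1) (by omega) ht
  refine ⟨sum_weight_le hstep', fun T hT => ?_⟩
  calc ∑ x, weight Δ N x ≤ 1 + N := sum_weight_le hstep'
    _ ≤ 1 + ∑ x ∈ T, (doublingCount Δ N x : ℝ) := by
      gcongr
      exact_mod_cast le_sum_doublingCount Δ hT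
    _ ≤ 1 + ∑ _x ∈ T, Real.logb 2 (2 * Fintype.card X) := by
      gcongr with x
      exact doublingCount_le_logb Δ (weight_le_two hstep' le_rfl x)
    _ = 1 + T.card * Real.logb 2 (2 * Fintype.card X) := by
      rw [sum_const, nsmul_eq_mul]
end

section
/- Let X be a finite nonempty set with n = |X|, let Δ_1, …, Δ_N be subsets of X with weights w_t(x) = (1/n)·2^{c_t(x)} where c_t(x) = #{s : 1 ≤ s ≤ t and x ∈ Δ_s}, assume Σ_{x ∈ Δ_t} w_{t−1}(x) < 1 for every t ∈ {1, …, N}, and assume every Δ_t intersects a fixed finite set T ⊆ X. Let 0 < δ < 1, let m ≥ 1 be a real number, let λ = ln(m/δ) > 0, and let (τ_x)_{x ∈ X} be independent exponential random variables with rate λ. Then the expected number of elements x ∈ X whose final weight exceeds their threshold, E[#{x ∈ X : w_N(x) > τ_x}], is at most (1 + |T| · log₂(2n)) · (ln m + ln(1/δ)). -/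
/-!
Every step doubles the weights of a region of total weight at most `1`, so it adds at most `1`
to the total weight, and a weight that gets doubled was at most `1` before, so no weight ever
exceeds `2`. Starting from weights `1/n`, an instance is therefore hit at most `log₂ (2n)` times;
since every region meets `T`, double counting bounds the number of steps by `|T| log₂ (2n)`.
An exponential threshold of rate `λ` falls below a weight `w` with probability `1 - e^{-λw} ≤ λw`,
so by linearity the expected number of selected instances is at most `λ` times the total weight.
-/

open MeasureTheory ProbabilityTheory Finset

section DoublingWeights

variable {X : Type*} [DecidableEq X] (Δ : ℕ → Finset X)

def hitCount (t : ℕ) (x : X) : ℕ := #{s ∈ Icc 1 t | x ∈ Δ s}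

def doublingWeight (a : ℝ) (t : ℕ) (x : X) : ℝ := a * 2 ^ hitCount Δ t x

@[simp]
lemma hitCount_zero (x : X) : hitCount Δ 0 x = 0 := by
  simp [hitCount]

lemma hitCount_succ (t : ℕ) (x : X) :
    hitCount Δ (t + 1) x = hitCount Δ t x + if x ∈ Δ (t + 1) then 1 else 0 := by
  simp only [hitCount, card_filter]
  exact sum_Icc_succ_top (by omega) _

lemma doublingWeight_nonneg {a : ℝ} (ha : 0 ≤ a) (t : ℕ) (x : X) :
    0 ≤ doublingWeight Δ a t x := by
  unfold doublingWeight
  positivity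

lemma doublingWeight_succ (a : ℝ) (t : ℕ) (x : X) :
    doublingWeight Δ a (t + 1) x =
      doublingWeight Δ a t x + if x ∈ Δ (t + 1) then doublingWeight Δ a t x else 0 := by
  simp only [doublingWeight, hitCount_succ]
  split_ifs <;> ring

lemma sum_doublingWeight_succ [Fintype X] (a : ℝ) (t : ℕ) :
    ∑ x, doublingWeight Δ a (t + 1) x =
      ∑ x, doublingWeight Δ a t x + ∑ x ∈ Δ (t + 1), doublingWeight Δ a t x := by
  simp only [doublingWeight_succ, sum_add_distrib, sum_ite_mem, univ_inter]

variable {Δ} {a : ℝ} {N : ℕ}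

lemma sum_doublingWeight_le [Fintype X]
    (hstep : ∀ t, 1 ≤ t → t ≤ N → ∑ x ∈ Δ t, doublingWeight Δ a (t - 1) x ≤ 1) :
    ∑ x, doublingWeight Δ a N x ≤ Fintype.card X * a + N := by
  induction N with
  | zero => simp [doublingWeight]
  | succ N ih =>
    have hlast := hstep (N + 1) (by omega) le_rfl
    have hprev := ih fun t h₁ h₂ => hstep t h₁ (by omega)
    rw [sum_doublingWeight_succ]
    push_cast
    simp only [add_tsub_cancel_right] at hlast
    linarith

lemma doublingWeight_le_two (ha₀ : 0 ≤ a) (ha : a ≤ 2)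
    (hstep : ∀ t, 1 ≤ t → t ≤ N → ∑ x ∈ Δ t, doublingWeight Δ a (t - 1) x ≤ 1) (x : X) :
    doublingWeight Δ a N x ≤ 2 := by
  induction N with
  | zero => simpa [doublingWeight]
  | succ N ih =>
    rw [doublingWeight_succ]
    split_ifs with hx
    · have hlast := hstep (N + 1) (by omega) le_rfl
      have hsingle := single_le_sum (fun y _ => doublingWeight_nonneg Δ ha₀ N y) hx
      simp only [add_tsub_cancel_right] at hlast
      linarith
    · simpa using ih fun t h₁ h₂ => hstep t h₁ (by omega)

lemma hitCount_le_logb (ha₀ : 0 < a) (ha : a ≤ 2)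
    (hstep : ∀ t, 1 ≤ t → t ≤ N → ∑ x ∈ Δ t, doublingWeight Δ a (t - 1) x ≤ 1) (x : X) :
    (hitCount Δ N x : ℝ) ≤ Real.logb 2 (2 / a) := by
  have hpow : (2 : ℝ) ^ hitCount Δ N x ≤ 2 / a := by
    rw [le_div_iff₀' ha₀]
    exact doublingWeight_le_two ha₀.le ha hstep x
  calc (hitCount Δ N x : ℝ) = Real.logb 2 (2 ^ hitCount Δ N x) := by simp [Real.logb_pow]
    _ ≤ Real.logb 2 (2 / a) := Real.logb_le_logb_of_le one_lt_two (by positivity) hpow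

lemma le_sum_hitCount {T : Finset X} (hT : ∀ t, 1 ≤ t → t ≤ N → ∃ x ∈ Δ t, x ∈ T) :
    N ≤ ∑ x ∈ T, hitCount Δ N x := by
  calc N = ∑ _t ∈ Icc 1 N, 1 := by simp
    _ ≤ ∑ t ∈ Icc 1 N, #{x ∈ T | x ∈ Δ t} := by
      refine sum_le_sum fun t ht => card_pos.2 ?_
      obtain ⟨x, hxΔ, hxT⟩ := hT t (mem_Icc.1 ht).1 (mem_Icc.1 ht).2
      exact ⟨x, mem_filter.2 ⟨hxT, hxΔ⟩⟩
    _ = ∑ x ∈ T, hitCount Δ N x :=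
      (sum_card_bipartiteAbove_eq_sum_card_bipartiteBelow (fun x t => x ∈ Δ t)).symm

lemma sum_doublingWeight_le_one_add [Fintype X] [Nonempty X] {T : Finset X}
    (hstep : ∀ t, 1 ≤ t → t ≤ N →
      ∑ x ∈ Δ t, doublingWeight Δ (1 / Fintype.card X) (t - 1) x ≤ 1)
    (hT : ∀ t, 1 ≤ t → t ≤ N → ∃ x ∈ Δ t, x ∈ T) :
    ∑ x, doublingWeight Δ (1 / Fintype.card X) N x
      ≤ 1 + #T * Real.logb 2 (2 * Fintype.card X) := by
  have hn : (1 : ℝ) ≤ Fintype.card X := by exact_mod_cast Fintype.card_pos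
  have ha₀ : (0 : ℝ) < 1 / Fintype.card X := by positivity
  have ha : (1 : ℝ) / Fintype.card X ≤ 2 := by
    rw [div_le_iff₀ (by positivity)]
    linarith
  calc ∑ x, doublingWeight Δ (1 / Fintype.card X) N x
      ≤ Fintype.card X * (1 / Fintype.card X) + N := sum_doublingWeight_le hstep
    _ ≤ 1 + ∑ x ∈ T, (hitCount Δ N x : ℝ) := by
      rw [mul_one_div_cancel (by positivity)]
      gcongr
      exact_mod_cast le_sum_hitCount hT
    _ ≤ 1 + ∑ _x ∈ T, Real.logb 2 (2 * Fintype.card X) := by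
      gcongr with x
      simpa using hitCount_le_logb ha₀ ha hstep x
    _ = 1 + #T * Real.logb 2 (2 * Fintype.card X) := by
      rw [sum_const, nsmul_eq_mul]

end DoublingWeights

section ExponentialThresholds

variable {Ω : Type*} [MeasurableSpace Ω] {μ : Measure Ω} {l : ℝ}

lemma expMeasure_real_Iio_le (hl : 0 < l) {a : ℝ} (ha : 0 ≤ a) :
    (expMeasure l).real (Set.Iio a) ≤ l * a := by
  have := isProbabilityMeasure_expMeasure hl
  calc (expMeasure l).real (Set.Iio a) ≤ (expMeasure l).real (Set.Iic a) :=
        measureReal_mono Set.Iio_subset_Iic_self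
    _ = 1 - Real.exp (-(l * a)) := by rw [← cdf_eq_real, cdf_expMeasure_eq hl, if_pos ha]
    _ ≤ l * a := by linarith [Real.add_one_le_exp (-(l * a))]

lemma integral_card_filter_eq_sum_measureReal {X : Type*} [Fintype X] [IsFiniteMeasure μ]
    {p : X → Ω → Prop} [∀ x ω, Decidable (p x ω)] (hp : ∀ x, MeasurableSet {ω | p x ω}) :
    ∫ ω, (#{x | p x ω} : ℝ) ∂μ = ∑ x, μ.real {ω | p x ω} := by
  have hcard : ∀ ω, (#{x | p x ω} : ℝ) = ∑ x, {ω | p x ω}.indicator 1 ω := by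
    intro ω
    simp only [card_filter, Nat.cast_sum, Nat.cast_ite, Nat.cast_one, Nat.cast_zero,
      Set.indicator_apply, Set.mem_ofPred_eq, Pi.one_apply]
  simp_rw [hcard]
  rw [integral_finsetSum _ fun x _ => (integrable_const 1).indicator (hp x)]
  simp_rw [integral_indicator_one (hp _)]

lemma integral_card_lt_le_mul_sum {X : Type*} [Fintype X] [IsFiniteMeasure μ]
    {τ : X → Ω → ℝ} (hτ : ∀ x, Measurable (τ x)) (hl : 0 < l)
    (hmap : ∀ x, μ.map (τ x) = expMeasure l) {b : X → ℝ} (hb : ∀ x, 0 ≤ b x) :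
    ∫ ω, (#{x | τ x ω < b x} : ℝ) ∂μ ≤ l * ∑ x, b x := by
  rw [integral_card_filter_eq_sum_measureReal fun x => measurableSet_lt (hτ x) measurable_const,
    mul_sum]
  refine sum_le_sum fun x _ => ?_
  calc μ.real {ω | τ x ω < b x} = (μ.map (τ x)).real (Set.Iio (b x)) :=
        (map_measureReal_apply (hτ x) measurableSet_Iio).symm
    _ ≤ l * b x := by rw [hmap x]; exact expMeasure_real_Iio_le hl (hb x)

end ExponentialThresholds

theorem expected_training_set_size_le_general
    {X : Type*} [Fintype X] [Nonempty X] [DecidableEq X]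
    (N : ℕ) (Δ : ℕ → Finset X)
    (c : ℕ → X → ℕ)
    (hc : ∀ t x, c t x = ((Finset.Icc 1 t).filter (fun s => x ∈ Δ s)).card)
    (w : ℕ → X → ℝ)
    (hw : ∀ t x, w t x = (1 / (Fintype.card X : ℝ)) * 2 ^ (c t x))
    (hstep : ∀ t, 1 ≤ t → t ≤ N → ∑ x ∈ Δ t, w (t - 1) x < 1)
    (T : Finset X)
    (hT : ∀ t, 1 ≤ t → t ≤ N → ∃ x ∈ Δ t, x ∈ T)
    {Ω : Type*} [MeasurableSpace Ω] (μ : Measure Ω) [IsProbabilityMeasure μ]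
    (δ : ℝ) (hδ₀ : 0 < δ)
    (m : ℝ) (hm : 1 ≤ m)
    (l : ℝ) (hlvalue : l = Real.log (m / δ)) (hl : 0 < l)
    (τ : X → Ω → ℝ) (hτ : ∀ x, Measurable (τ x))
    (hmap : ∀ x, μ.map (τ x) = expMeasure l) :
    (∫ ω, ((Finset.univ.filter (fun x => τ x ω < w N x)).card : ℝ) ∂μ)
      ≤ (1 + T.card * Real.logb 2 (2 * Fintype.card X)) *
          (Real.log m + Real.log (1 / δ)) := by
  obtain rfl : c = hitCount Δ := funext fun t => funext (hc t)
  obtain rfl : w = doublingWeight Δ (1 / Fintype.card X) := funext fun t => funext (hw t)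
  have hlog : Real.log m + Real.log (1 / δ) = l := by
    rw [hlvalue, one_div, Real.log_inv, ← sub_eq_add_neg,
      Real.log_div (by linarith) hδ₀.ne']
  calc _ ≤ l * ∑ x, doublingWeight Δ (1 / Fintype.card X) N x :=
        integral_card_lt_le_mul_sum hτ hl hmap fun x => doublingWeight_nonneg Δ (by positivity) N x
    _ ≤ l * (1 + T.card * Real.logb 2 (2 * Fintype.card X)) := by
        gcongr
        exact sum_doublingWeight_le_one_add (fun t h₁ h₂ => (hstep t h₁ h₂).le) hT
    _ = _ := by rw [hlog, mul_comm]

/-- quantitative content of Proposition 1 of the paper. Combine the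
weight dynamics of the teaching oracle (weights start at `1/n`, are doubled exactly in
the steps whose region `Δ t` contains them, each doubling step has pre-doubling total
weight `< 1` on `Δ t`, and every `Δ t` intersects the teaching set `T`) with i.i.d.
exponential thresholds `τ x` of rate `λ = ln (m / δ)`: the expected number of
instances whose final weight exceeds their threshold is at most
`(1 + |T| * log₂ (2n)) * (ln m + ln (1/δ))`. -/
theorem expected_training_set_size_le
    {X : Type*} [Fintype X] [Nonempty X] [DecidableEq X]
    (N : ℕ) (Δ : ℕ → Finset X)
    (c : ℕ → X → ℕ)
    (hc : ∀ t x, c t x = ((Finset.Icc 1 t).filter (fun s => x ∈ Δ s)).card)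
    (w : ℕ → X → ℝ)
    (hw : ∀ t x, w t x = (1 / (Fintype.card X : ℝ)) * 2 ^ (c t x))
    (hstep : ∀ t, 1 ≤ t → t ≤ N → ∑ x ∈ Δ t, w (t - 1) x < 1)
    (T : Finset X)
    (hT : ∀ t, 1 ≤ t → t ≤ N → ∃ x ∈ Δ t, x ∈ T)
    {Ω : Type*} [MeasurableSpace Ω] (μ : Measure Ω) [IsProbabilityMeasure μ]
    (δ : ℝ) (hδ₀ : 0 < δ) (hδ₁ : δ < 1)
    (m : ℝ) (hm : 1 ≤ m)
    (l : ℝ) (hlvalue : l = Real.log (m / δ)) (hl : 0 < l)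
    (τ : X → Ω → ℝ) (hτ : ∀ x, Measurable (τ x))
    (hmap : ∀ x, μ.map (τ x) = expMeasure l)
    (hindep : iIndepFun τ μ) :
    (∫ ω, ((Finset.univ.filter (fun x => τ x ω < w N x)).card : ℝ) ∂μ)
      ≤ (1 + T.card * Real.logb 2 (2 * Fintype.card X)) *
          (Real.log m + Real.log (1 / δ)) :=
  expected_training_set_size_le_general N Δ c hc w hw hstep T hT μ δ hδ₀ m hm l hlvalue hl τ hτ hmap
end

section
/- Let X be a set, let 𝒢 be a finite nonempty set with a distinguished element g*, and let 0 < δ < 1. Set λ = ln(|𝒢|/δ). Suppose that (τ_x)_{x ∈ X'} are independent exponential random variables with rate λ indexed by a finite set X' ⊆ X, and that for each g ∈ 𝒢 with g ≠ g* we are given a finite set Δ_g ⊆ X' and a weight function w_g : X' → [0, ∞) with Σ_{x ∈ Δ_g} w_g(x) ≥ 1. Then the probability that there exists some g ∈ 𝒢 with g ≠ g* such that τ_x ≥ w_g(x) for all x ∈ Δ_g is at most δ. Consequently, with probability at least 1 − δ, every such g has some x ∈ Δ_g with τ_x < w_g(x). -/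
open MeasureTheory ProbabilityTheory Finset

/-! For a fixed `g ≠ g*`, independence turns the probability that every threshold `τ x`,
`x ∈ Δ g`, is at least `w g x` into a product of exponential tails, which is at most
`exp (-λ ∑ x ∈ Δ g, w g x) ≤ exp (-λ) = δ / |𝒢|`. A union bound over `g ≠ g*` gives `δ`. -/

namespace ProbabilityTheory

instance nullSingletonClass_expMeasure (r : ℝ) : NullSingletonClass (expMeasure r) :=
  ⟨fun x ↦ withDensity_absolutelyContinuous _ _ (measure_singleton x)⟩

lemma expMeasure_Ici_le {r : ℝ} (hr : 0 < r) (c : ℝ) :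
    expMeasure r (Set.Ici c) ≤ ENNReal.ofReal (Real.exp (-(r * c))) := by
  have := isProbabilityMeasure_expMeasure hr
  rcases lt_or_ge c 0 with hc | hc
  · exact prob_le_one.trans (ENNReal.one_le_ofReal.mpr (Real.one_le_exp (by nlinarith)))
  · have hexp_le_one : Real.exp (-(r * c)) ≤ 1 :=
      Real.exp_le_one_iff.mpr (by nlinarith)
    rw [measure_congr Ioi_ae_eq_Ici.symm, ← Set.compl_Iic,
      prob_compl_eq_one_sub measurableSet_Iic, ← ofReal_cdf, cdf_expMeasure_eq hr, if_pos hc,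
      ← ENNReal.ofReal_one, ← ENNReal.ofReal_sub _ (sub_nonneg.mpr hexp_le_one), sub_sub_cancel]

variable {Ω ι : Type*} [MeasurableSpace Ω] {μ : Measure Ω} {r : ℝ}

lemma measure_preimage_Ici_le_of_map_eq_expMeasure {τ : Ω → ℝ} (hr : 0 < r)
    (hmap : μ.map τ = expMeasure r) (c : ℝ) :
    μ (τ ⁻¹' Set.Ici c) ≤ ENNReal.ofReal (Real.exp (-(r * c))) := by
  -- `μ.map` of a non-a.e.-measurable function is `0`, so the law of `τ` forces measurability.
  have hτ : AEMeasurable τ μ :=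
    .of_map_ne_zero (hmap ▸ (isProbabilityMeasure_expMeasure hr).ne_zero)
  rw [← Measure.map_apply_of_aemeasurable hτ measurableSet_Ici, hmap]
  exact expMeasure_Ici_le hr c

lemma iIndepFun.measure_forall_le_le_exp_neg_mul_sum {τ : ι → Ω → ℝ} (hindep : iIndepFun τ μ)
    (hr : 0 < r) (hmap : ∀ i, μ.map (τ i) = expMeasure r) (s : Finset ι) (c : ι → ℝ) :
    μ {ω | ∀ i ∈ s, c i ≤ τ i ω} ≤ ENNReal.ofReal (Real.exp (-(r * ∑ i ∈ s, c i))) :=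
  calc μ {ω | ∀ i ∈ s, c i ≤ τ i ω} = ∏ i ∈ s, μ (τ i ⁻¹' Set.Ici (c i)) := by
        rw [← hindep.meas_biInter fun i _ ↦ ⟨_, measurableSet_Ici, rfl⟩]
        congr 1
        ext ω
        simp
    _ ≤ ∏ i ∈ s, ENNReal.ofReal (Real.exp (-(r * c i))) :=
        prod_le_prod' fun i _ ↦ measure_preimage_Ici_le_of_map_eq_expMeasure hr (hmap i) (c i)
    _ = ENNReal.ofReal (Real.exp (-(r * ∑ i ∈ s, c i))) := by
        rw [← ENNReal.ofReal_prod_of_nonneg fun i _ ↦ (Real.exp_pos _).le, ← Real.exp_sum,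
          mul_sum, sum_neg_distrib]

end ProbabilityTheory

namespace MeasureTheory

variable {Ω ι : Type*} [MeasurableSpace Ω] {μ : Measure Ω}

lemma measure_exists_ne_le [Fintype ι] (i₀ : ι) (p : ι → Ω → Prop) {ε : ENNReal}
    (h : ∀ i, i ≠ i₀ → μ {ω | p i ω} ≤ ε) :
    μ {ω | ∃ i, i ≠ i₀ ∧ p i ω} ≤ Fintype.card ι * ε := by
  classical
  calc μ {ω | ∃ i, i ≠ i₀ ∧ p i ω} = μ (⋃ i ∈ univ.filter (· ≠ i₀), {ω | p i ω}) := by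
        congr 1
        ext ω
        simp
    _ ≤ ∑ i ∈ univ.filter (· ≠ i₀), μ {ω | p i ω} := measure_biUnion_finset_le _ _
    _ ≤ (univ.filter (· ≠ i₀)).card • ε :=
        sum_le_card_nsmul _ _ _ fun i hi ↦ h i (by simpa using hi)
    _ ≤ Fintype.card ι * ε := by
        rw [nsmul_eq_mul]
        gcongr
        exact_mod_cast card_filter_le _ _

lemma one_sub_toReal_le_toReal_measure_compl [IsProbabilityMeasure μ] (s : Set Ω) :
    1 - (μ s).toReal ≤ (μ sᶜ).toReal := by
  have h := measureReal_union_le (μ := μ) s sᶜ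
  rw [Set.union_compl_self, probReal_univ] at h
  simp only [measureReal_def] at h
  linarith

end MeasureTheory

theorem prob_all_hypotheses_invalidated_general
    {Ω : Type*} [MeasurableSpace Ω] (μ : Measure Ω) [IsProbabilityMeasure μ]
    {𝒢 : Type*} [Fintype 𝒢] (gstar : 𝒢)
    (δ : ℝ) (hδ₀ : 0 < δ) (hδ₁ : δ < 1)
    {X' : Type*}
    (l : ℝ) (hlvalue : l = Real.log ((Fintype.card 𝒢 : ℝ) / δ))
    (τ : X' → Ω → ℝ)
    (hmap : ∀ x, μ.map (τ x) = expMeasure l)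
    (hindep : iIndepFun τ μ)
    (Δ : 𝒢 → Finset X') (w : 𝒢 → X' → ℝ)
    (hw1 : ∀ g, g ≠ gstar → 1 ≤ ∑ x ∈ Δ g, w g x) :
    (μ {ω | ∃ g, g ≠ gstar ∧ ∀ x ∈ Δ g, w g x ≤ τ x ω}).toReal ≤ δ ∧
      1 - δ ≤ (μ {ω | ∀ g, g ≠ gstar → ∃ x ∈ Δ g, τ x ω < w g x}).toReal := by
  have hcard : (1 : ℝ) ≤ Fintype.card 𝒢 :=
    Nat.one_le_cast.mpr (Fintype.card_pos_iff.mpr ⟨gstar⟩)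
  have hl : 0 < l := hlvalue ▸ Real.log_pos ((one_lt_div hδ₀).mpr (by linarith))
  have hexp : Real.exp (-l) = δ / Fintype.card 𝒢 := by
    rw [hlvalue, ← Real.log_inv, Real.exp_log (by positivity), inv_div]
  have hbad : ∀ g, g ≠ gstar →
      μ {ω | ∀ x ∈ Δ g, w g x ≤ τ x ω} ≤ ENNReal.ofReal (δ / Fintype.card 𝒢) := fun g hg ↦
    (hindep.measure_forall_le_le_exp_neg_mul_sum hl hmap (Δ g) (w g)).trans <|
      ENNReal.ofReal_le_ofReal (hexp ▸ Real.exp_le_exp.mpr (by nlinarith [hw1 g hg]))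
  set E := {ω | ∃ g, g ≠ gstar ∧ ∀ x ∈ Δ g, w g x ≤ τ x ω}
  have hE : μ E ≤ ENNReal.ofReal δ := by
    refine (measure_exists_ne_le gstar (fun g ω ↦ ∀ x ∈ Δ g, w g x ≤ τ x ω) hbad).trans_eq ?_
    rw [← ENNReal.ofReal_natCast, ← ENNReal.ofReal_mul (by positivity),
      mul_div_cancel₀ _ (by positivity)]
  have hcompl : {ω | ∀ g, g ≠ gstar → ∃ x ∈ Δ g, τ x ω < w g x} = Eᶜ := by
    ext ω
    simp [E]
  have hE_toReal := ENNReal.toReal_le_of_le_ofReal hδ₀.le hE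
  refine ⟨hE_toReal, ?_⟩
  rw [hcompl]
  linarith [one_sub_toReal_le_toReal_measure_compl (μ := μ) E]

/-- Lemma 4 of the paper. Let `𝒢` be a finite nonempty class with a
distinguished element `g*`, `0 < δ < 1`, and `λ = ln (|𝒢| / δ)`. Given independent
exponential thresholds `(τ x)_{x ∈ X'}` of rate `λ` on a finite index set `X'`, and
for each `g ≠ g*` a finite set `Δ g ⊆ X'` and weights `w g : X' → [0, ∞)` with
`∑ x ∈ Δ g, w g x ≥ 1`, the probability that some `g ≠ g*` has `τ x ≥ w g x` for all
`x ∈ Δ g` is at most `δ`; consequently, with probability at least `1 - δ`, every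
`g ≠ g*` has some `x ∈ Δ g` with `τ x < w g x`. -/
theorem prob_all_hypotheses_invalidated
    {Ω : Type*} [MeasurableSpace Ω] (μ : Measure Ω) [IsProbabilityMeasure μ]
    {𝒢 : Type*} [Fintype 𝒢] [Nonempty 𝒢] (gstar : 𝒢)
    (δ : ℝ) (hδ₀ : 0 < δ) (hδ₁ : δ < 1)
    {X' : Type*} [Fintype X']
    (l : ℝ) (hlvalue : l = Real.log ((Fintype.card 𝒢 : ℝ) / δ))
    (τ : X' → Ω → ℝ) (hτ : ∀ x, Measurable (τ x))
    (hmap : ∀ x, μ.map (τ x) = expMeasure l)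
    (hindep : iIndepFun τ μ)
    (Δ : 𝒢 → Finset X') (w : 𝒢 → X' → ℝ)
    (hw : ∀ g x, 0 ≤ w g x)
    (hw1 : ∀ g, g ≠ gstar → 1 ≤ ∑ x ∈ Δ g, w g x) :
    (μ {ω | ∃ g, g ≠ gstar ∧ ∀ x ∈ Δ g, w g x ≤ τ x ω}).toReal ≤ δ ∧
      1 - δ ≤ (μ {ω | ∀ g, g ≠ gstar → ∃ x ∈ Δ g, τ x ω < w g x}).toReal :=
  prob_all_hypotheses_invalidated_general μ gstar δ hδ₀ hδ₁ l hlvalue τ hmap hindep Δ w hw1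
end
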